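/- arXiv:1707.00808 — 4 statements merged into one kernel-verified Lean document; each statement's English description precedes it below -/
import Mathlib

section
/- For the Ricker kernel K(t) = (1 - t²)exp(-t²/2), if s₁ ≠ s₂ and |s₁| < 1 and |s₂| < 1, then K(s₂)K'(s₁) - K'(s₂)K(s₁) ≠ 0. -/
lemma ricker_hasDerivAt (t : ℝ) :
    HasDerivAt (fun t : ℝ => (1 - t ^ 2) * Real.exp (-t ^ 2 / 2))
      ((t ^ 3 - 3 * t) * Real.exp (-t ^ 2 / 2)) t := by
  have h1 : HasDerivAt (fun t : ℝ => 1 - t ^ 2) (-(2 * t)) t := by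
    simpa using ((hasDerivAt_pow 2 t).const_sub 1)
  have h2 : HasDerivAt (fun t : ℝ => -t ^ 2 / 2) (-t) t := by
    have := ((hasDerivAt_pow 2 t).neg.div_const 2)
    simpa [neg_div] using this
  have h3 : HasDerivAt (fun t : ℝ => Real.exp (-t ^ 2 / 2))
      (Real.exp (-t ^ 2 / 2) * (-t)) t := (Real.hasDerivAt_exp _).comp t h2
  have : HasDerivAt (fun t : ℝ => (1 - t ^ 2) * Real.exp (-t ^ 2 / 2)) _ t := h1.mul h3
  convert this using 1
  ring

/-- For the Ricker kernel `K(t) = (1 - t²)·exp (-t²/2)`, if `s₁ ≠ s₂`, `|s₁| < 1`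
and `|s₂| < 1`, then `K(s₂)K'(s₁) - K'(s₂)K(s₁) ≠ 0`. -/
theorem ricker_denominator_ne_zero (s₁ s₂ : ℝ) (hne : s₁ ≠ s₂)
    (h₁ : |s₁| < 1) (h₂ : |s₂| < 1) :
    (fun K : ℝ → ℝ =>
        K s₂ * deriv K s₁ - deriv K s₂ * K s₁)
      (fun t => (1 - t ^ 2) * Real.exp (-t ^ 2 / 2)) ≠ 0 := by
  simp only
  rw [(ricker_hasDerivAt s₁).deriv, (ricker_hasDerivAt s₂).deriv]
  have key : (1 - s₂ ^ 2) * Real.exp (-s₂ ^ 2 / 2) * ((s₁ ^ 3 - 3 * s₁) * Real.exp (-s₁ ^ 2 / 2)) -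
      (s₂ ^ 3 - 3 * s₂) * Real.exp (-s₂ ^ 2 / 2) * ((1 - s₁ ^ 2) * Real.exp (-s₁ ^ 2 / 2)) =
      (s₁ - s₂) * ((s₁ - s₂) ^ 2 - 3 - s₁ ^ 2 * s₂ ^ 2) *
        (Real.exp (-s₁ ^ 2 / 2) * Real.exp (-s₂ ^ 2 / 2)) := by ring
  rw [key]
  have ha := abs_lt.mp h₁
  have hb := abs_lt.mp h₂
  have hfac : (s₁ - s₂) ^ 2 - 3 - s₁ ^ 2 * s₂ ^ 2 < 0 := by
    have p1 : (0:ℝ) < 1 - s₁ ^ 2 := by nlinarith [ha.1, ha.2]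
    have p2 : (0:ℝ) < 1 - s₂ ^ 2 := by nlinarith [hb.1, hb.2]
    have p3 : (0:ℝ) < 1 + s₁ * s₂ := by nlinarith [mul_pos (by linarith [ha.1] : (0:ℝ) < 1 + s₁) (by linarith [hb.1] : (0:ℝ) < 1 + s₂), mul_pos (by linarith [ha.2] : (0:ℝ) < 1 - s₁) (by linarith [hb.2] : (0:ℝ) < 1 - s₂)]
    nlinarith [mul_pos p1 p2]
  have h1 : s₁ - s₂ ≠ 0 := sub_ne_zero.mpr hne
  have he : Real.exp (-s₁ ^ 2 / 2) * Real.exp (-s₂ ^ 2 / 2) > 0 :=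
    mul_pos (Real.exp_pos _) (Real.exp_pos _)
  exact mul_ne_zero (mul_ne_zero h1 (ne_of_lt hfac)) (ne_of_gt he)
end

section
/- Under the hypotheses of the Schur-complement lemma, the α-part of the unique solution to the block system with right-hand side (ρ, 0) satisfies ‖α - ρ‖_∞ ≤ ‖I - C‖_∞ · ‖C⁻¹‖_∞ · ‖ρ‖_∞. -/
attribute [local instance] Matrix.linftyOpNormedAddCommGroup Matrix.linftyOpNormedRing

/-- Under the hypotheses of the Schur-complement lemma, the `α`-part of the solution to
the block system with right-hand side `(ρ, 0)` satisfies
`‖α - ρ‖_∞ ≤ ‖I - C‖_∞·‖C⁻¹‖_∞·‖ρ‖_∞`. -/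
theorem schur_complement_alpha_bound (n : ℕ)
    (B W B₁ W₁ : Matrix (Fin n) (Fin n) ℝ)
    (hW₁ : ‖(1 : Matrix (Fin n) (Fin n) ℝ) - W₁‖ < 1)
    (hC : ‖(1 : Matrix (Fin n) (Fin n) ℝ) - (B - W * W₁⁻¹ * B₁)‖ < 1)
    (ρ α β : Fin n → ℝ)
    (h1 : B.mulVec α + W.mulVec β = ρ)
    (h2 : B₁.mulVec α + W₁.mulVec β = 0) :
    ‖α - ρ‖ ≤ ‖(1 : Matrix (Fin n) (Fin n) ℝ) - (B - W * W₁⁻¹ * B₁)‖ *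
      ‖(B - W * W₁⁻¹ * B₁)⁻¹‖ * ‖ρ‖ := by
  set C : Matrix (Fin n) (Fin n) ℝ := B - W * W₁⁻¹ * B₁ with hCdef
  have : @CompleteSpace (Matrix (Fin n) (Fin n) ℝ) (NormedRing.toMetricSpace.toUniformSpace) := by
    letI : NormedSpace ℝ (Matrix (Fin n) (Fin n) ℝ) := Matrix.linftyOpNormedSpace
    exact FiniteDimensional.complete ℝ _
  -- W₁ is a unit
  have hWu : IsUnit W₁ := by
    have := (Units.oneSub (1 - W₁) hW₁).isUnit
    simpa using this
  have hWdet : IsUnit W₁.det := (Matrix.isUnit_iff_isUnit_det W₁).mp hWu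
  -- C is a unit
  have hCu : IsUnit C := by
    have := (Units.oneSub (1 - C) hC).isUnit
    simpa using this
  have hCdet : IsUnit C.det := (Matrix.isUnit_iff_isUnit_det C).mp hCu
  -- β = -(W₁⁻¹ * B₁) *ᵥ α
  have hβ : β = -((W₁⁻¹ * B₁).mulVec α) := by
    have h2' : W₁.mulVec β = -(B₁.mulVec α) := by
      rw [eq_neg_iff_add_eq_zero, add_comm]; exact h2
    have := congrArg (fun v => W₁⁻¹.mulVec v) h2'
    simpa [Matrix.mulVec_mulVec, Matrix.nonsing_inv_mul _ hWdet, Matrix.mulVec_neg,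
      Matrix.one_mulVec, Matrix.mul_assoc] using this
  -- C *ᵥ α = ρ
  have hCα : C.mulVec α = ρ := by
    rw [hCdef, Matrix.sub_mulVec, ← Matrix.mulVec_mulVec, ← Matrix.mulVec_mulVec]
    rw [← h1, hβ]
    simp [Matrix.mulVec_neg, sub_eq_add_neg]
  -- α = C⁻¹ *ᵥ ρ
  have hα : α = C⁻¹.mulVec ρ := by
    rw [← hCα, Matrix.mulVec_mulVec, Matrix.nonsing_inv_mul _ hCdet, Matrix.one_mulVec]
  have key : α - ρ = ((1 - C) * C⁻¹).mulVec ρ := by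
    rw [Matrix.sub_mul, Matrix.one_mul, Matrix.sub_mulVec, ← Matrix.mulVec_mulVec, ← hα,
      ← hCα, hα]
  calc ‖α - ρ‖ ≤ ‖(1 - C) * C⁻¹‖ * ‖ρ‖ := by
        rw [key]; exact Matrix.linfty_opNorm_mulVec _ _
    _ ≤ ‖(1 : Matrix (Fin n) (Fin n) ℝ) - C‖ * ‖C⁻¹‖ * ‖ρ‖ := by
        gcongr
        exact norm_mul_le _ _
end

section
/- For τ ∈ [0.0775, 0.165], the function f(s) = (1 - s²)·exp((s + τ)²/2) / (τ·(3 - τ² + s²(s+τ)²)) is increasing on [-τ, 0], and hence attains its maximum on that interval at s = 0, with value exp(τ²/2)/(τ(3 - τ²)). -/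
private lemma rwcb_bracket (τ s₁ s₂ : ℝ) (hτ1 : (0.0775:ℝ) ≤ τ) (hτ2 : τ ≤ 0.165)
    (h1 : -τ ≤ s₁) (h1' : s₁ ≤ 0) (h2 : -τ ≤ s₂) (h2' : s₂ ≤ 0) :
    0 ≤ -(s₁+s₂)*(3-τ^2) - (s₁+s₂+τ)*(s₁^2+s₂^2+τ*(s₁+s₂)) + s₁^2*s₂^2*(s₁+s₂+2*τ) := by
  have hY : s₁^2+s₂^2+τ*(s₁+s₂) ≤ 0 := by
    nlinarith [mul_nonneg (neg_nonneg.2 h1') (by linarith : (0:ℝ) ≤ s₁+τ),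
      mul_nonneg (neg_nonneg.2 h2') (by linarith : (0:ℝ) ≤ s₂+τ)]
  nlinarith [mul_nonneg (by linarith : (0:ℝ) ≤ s₁+s₂+2*τ) (neg_nonneg.2 hY),
    mul_nonneg (by linarith : (0:ℝ) ≤ τ) (by positivity : (0:ℝ) ≤ s₁^2+s₂^2),
    mul_nonneg (mul_nonneg (sq_nonneg s₁) (sq_nonneg s₂)) (by linarith : (0:ℝ) ≤ s₁+s₂+2*τ),
    mul_nonneg (by linarith : (0:ℝ) ≤ -(s₁+s₂)) (by nlinarith : (0:ℝ) ≤ 3-2*τ^2)]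

private lemma rwcb_key (τ s₁ s₂ : ℝ) (hτ1 : (0.0775:ℝ) ≤ τ) (hτ2 : τ ≤ 0.165)
    (h1 : -τ ≤ s₁) (h2 : s₁ ≤ s₂) (h3 : s₂ ≤ 0) :
    (1 - s₁^2) * (3 - τ^2 + s₂^2*(s₂+τ)^2) ≤ (1 - s₂^2) * (3 - τ^2 + s₁^2*(s₁+τ)^2) := by
  have hb := rwcb_bracket τ s₁ s₂ hτ1 hτ2 h1 (by linarith) (by linarith) h3
  nlinarith [mul_nonneg (sub_nonneg.2 h2) hb]

/-- For `τ ∈ [0.0775, 0.165]`, the function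
`f(s) = (1 - s²)·exp((s + τ)²/2) / (τ·(3 - τ² + s²(s+τ)²))` is increasing on `[-τ, 0]`,
hence attains its maximum there at `s = 0`, with value `exp(τ²/2)/(τ(3 - τ²))`. -/
theorem ricker_wave_coefficient_bound (τ : ℝ) (hτ : τ ∈ Set.Icc (0.0775 : ℝ) 0.165) :
    MonotoneOn
      (fun s : ℝ => (1 - s ^ 2) * Real.exp ((s + τ) ^ 2 / 2) /
        (τ * (3 - τ ^ 2 + s ^ 2 * (s + τ) ^ 2)))
      (Set.Icc (-τ) 0) ∧
    (∀ s ∈ Set.Icc (-τ) (0 : ℝ),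
      (1 - s ^ 2) * Real.exp ((s + τ) ^ 2 / 2) /
          (τ * (3 - τ ^ 2 + s ^ 2 * (s + τ) ^ 2)) ≤
        Real.exp (τ ^ 2 / 2) / (τ * (3 - τ ^ 2))) ∧
    (1 - (0 : ℝ) ^ 2) * Real.exp (((0 : ℝ) + τ) ^ 2 / 2) /
        (τ * (3 - τ ^ 2 + (0 : ℝ) ^ 2 * ((0 : ℝ) + τ) ^ 2)) =
      Real.exp (τ ^ 2 / 2) / (τ * (3 - τ ^ 2)) := by
  obtain ⟨hτ1, hτ2⟩ := hτ
  have hτ0 : (0:ℝ) < τ := by linarith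
  have hD : ∀ s : ℝ, 0 < 3 - τ ^ 2 + s ^ 2 * (s + τ) ^ 2 := by
    intro s
    nlinarith [sq_nonneg s, sq_nonneg (s + τ), mul_nonneg (sq_nonneg s) (sq_nonneg (s+τ))]
  have hmono : MonotoneOn
      (fun s : ℝ => (1 - s ^ 2) * Real.exp ((s + τ) ^ 2 / 2) /
        (τ * (3 - τ ^ 2 + s ^ 2 * (s + τ) ^ 2)))
      (Set.Icc (-τ) 0) := by
    rintro s₁ ⟨ha1, ha2⟩ s₂ ⟨hb1, hb2⟩ h12
    have hD1 := hD s₁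
    have hD2 := hD s₂
    have hden1 : 0 < τ * (3 - τ ^ 2 + s₁ ^ 2 * (s₁ + τ) ^ 2) := by positivity
    have hden2 : 0 < τ * (3 - τ ^ 2 + s₂ ^ 2 * (s₂ + τ) ^ 2) := by positivity
    have hnum1 : 0 ≤ 1 - s₁ ^ 2 := by nlinarith
    have hnum2 : 0 ≤ 1 - s₂ ^ 2 := by nlinarith
    have hexp : Real.exp ((s₁ + τ) ^ 2 / 2) ≤ Real.exp ((s₂ + τ) ^ 2 / 2) := by
      apply Real.exp_le_exp.2
      have : (s₁ + τ) ^ 2 ≤ (s₂ + τ) ^ 2 := by nlinarith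
      linarith
    have hkey := rwcb_key τ s₁ s₂ hτ1 hτ2 ha1 h12 hb2
    rw [div_le_div_iff₀ hden1 hden2]
    have e1pos : (0:ℝ) < Real.exp ((s₁ + τ) ^ 2 / 2) := Real.exp_pos _
    calc (1 - s₁ ^ 2) * Real.exp ((s₁ + τ) ^ 2 / 2) * (τ * (3 - τ ^ 2 + s₂ ^ 2 * (s₂ + τ) ^ 2))
        = τ * Real.exp ((s₁ + τ) ^ 2 / 2) * ((1 - s₁ ^ 2) * (3 - τ ^ 2 + s₂ ^ 2 * (s₂ + τ) ^ 2)) := by ring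
      _ ≤ τ * Real.exp ((s₁ + τ) ^ 2 / 2) * ((1 - s₂ ^ 2) * (3 - τ ^ 2 + s₁ ^ 2 * (s₁ + τ) ^ 2)) := by
          apply mul_le_mul_of_nonneg_left hkey; positivity
      _ ≤ τ * Real.exp ((s₂ + τ) ^ 2 / 2) * ((1 - s₂ ^ 2) * (3 - τ ^ 2 + s₁ ^ 2 * (s₁ + τ) ^ 2)) := by
          apply mul_le_mul_of_nonneg_right _ (by positivity)
          exact mul_le_mul_of_nonneg_left hexp (le_of_lt hτ0)
      _ = (1 - s₂ ^ 2) * Real.exp ((s₂ + τ) ^ 2 / 2) * (τ * (3 - τ ^ 2 + s₁ ^ 2 * (s₁ + τ) ^ 2)) := by ring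
  have hval : (1 - (0 : ℝ) ^ 2) * Real.exp (((0 : ℝ) + τ) ^ 2 / 2) /
        (τ * (3 - τ ^ 2 + (0 : ℝ) ^ 2 * ((0 : ℝ) + τ) ^ 2)) =
      Real.exp (τ ^ 2 / 2) / (τ * (3 - τ ^ 2)) := by
    norm_num
  refine ⟨hmono, ?_, hval⟩
  intro s hs
  have h0 : (0:ℝ) ∈ Set.Icc (-τ) (0:ℝ) := ⟨by linarith, le_refl _⟩
  have := hmono hs h0 hs.2
  simpa [hval] using this.trans_eq hval
end

section
/- Suppose the pair (μ, w) is the unique minimizer of the convex program minimizing ‖μ̃‖_TV + λ‖w̃‖₁ subject to (K * μ̃)(sᵢ) + w̃ᵢ = yᵢ for i = 1,…,n, where yᵢ = (K*μ)(sᵢ) + wᵢ. Let μ' be the restriction of μ to any subset T' of its (finite atomic) support and w' the restriction of w to any subset Ω' of its support, and set y'ᵢ = (K*μ')(sᵢ) + w'ᵢ. Then (μ', w') is the unique minimizer of the same program with data y', for the same value of λ. -/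
/-- The total-variation norm of a finite atomic signed measure, identified with its
finitely supported amplitude function: the `ℓ1` norm of the amplitudes. -/
noncomputable def tvNorm (μ : ℝ →₀ ℝ) : ℝ := ∑ t ∈ μ.support, |μ t|

/-- The convolution of a finite atomic measure `μ` with kernel `K`, sampled at `s`. -/
noncomputable def convSample (K : ℝ → ℝ) (μ : ℝ →₀ ℝ) (s : ℝ) : ℝ :=
  ∑ t ∈ μ.support, μ t * K (s - t)

lemma tvNorm_eq_sum_superset (ρ : ℝ →₀ ℝ) (S : Finset ℝ) (h : ρ.support ⊆ S) :
    tvNorm ρ = ∑ t ∈ S, |ρ t| := by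
  unfold tvNorm
  exact Finset.sum_subset h (fun t _ ht => by
    simp [Finsupp.notMem_support_iff.mp ht])

lemma convSample_add (K : ℝ → ℝ) (ρ σ : ℝ →₀ ℝ) (s : ℝ) :
    convSample K (ρ + σ) s = convSample K ρ s + convSample K σ s := by
  have : ∀ τ : ℝ →₀ ℝ, convSample K τ s = τ.sum (fun t a => a * K (s - t)) := fun τ => rfl
  rw [this, this, this]
  exact Finsupp.sum_add_index' (fun t => zero_mul _) (fun t a b => add_mul a b _)

lemma tvNorm_add_le (ρ σ : ℝ →₀ ℝ) : tvNorm (ρ + σ) ≤ tvNorm ρ + tvNorm σ := by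
  rw [tvNorm_eq_sum_superset (ρ + σ) (ρ.support ∪ σ.support) Finsupp.support_add,
    tvNorm_eq_sum_superset ρ (ρ.support ∪ σ.support) Finset.subset_union_left,
    tvNorm_eq_sum_superset σ (ρ.support ∪ σ.support) Finset.subset_union_right,
    ← Finset.sum_add_distrib]
  exact Finset.sum_le_sum (fun t _ => by simpa using abs_add_le (ρ t) (σ t))

/-- If `(μ, w)` is the unique minimizer of `‖μ̃‖_TV + λ‖w̃‖₁` subject to
`(K*μ̃)(sᵢ) + w̃ᵢ = yᵢ` where `yᵢ = (K*μ)(sᵢ) + wᵢ`, then for any trimmed versions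
`μ'` (restriction of `μ` to `T' ⊆ supp μ`) and `w'` (restriction of `w` to
`Ω' ⊆ supp w`), the pair `(μ', w')` is the unique minimizer of the same program with
data `y'ᵢ = (K*μ')(sᵢ) + w'ᵢ`, for the same `λ`. -/
theorem sparse_trim (K : ℝ → ℝ) (n : ℕ) (s : Fin n → ℝ)
    (μ : ℝ →₀ ℝ) (w : Fin n → ℝ) (lam : ℝ) (hlam : 0 < lam) (y : Fin n → ℝ)
    (hy : ∀ i, y i = convSample K μ (s i) + w i)
    (hunique : ∀ (ν : ℝ →₀ ℝ) (v : Fin n → ℝ),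
      (∀ i, convSample K ν (s i) + v i = y i) → (ν, v) ≠ (μ, w) →
      tvNorm μ + lam * ∑ i, |w i| < tvNorm ν + lam * ∑ i, |v i|)
    (T' : Set ℝ) [DecidablePred (· ∈ T')] (hT' : T' ⊆ ↑μ.support)
    (Ω' : Set (Fin n)) [DecidablePred (· ∈ Ω')] (hΩ' : ∀ i ∈ Ω', w i ≠ 0)
    (μ' : ℝ →₀ ℝ) (hμ' : ∀ t, μ' t = if t ∈ T' then μ t else 0)
    (w' : Fin n → ℝ) (hw' : ∀ i, w' i = if i ∈ Ω' then w i else 0)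
    (y' : Fin n → ℝ) (hy' : ∀ i, y' i = convSample K μ' (s i) + w' i) :
    ∀ (ν : ℝ →₀ ℝ) (v : Fin n → ℝ),
      (∀ i, convSample K ν (s i) + v i = y' i) → (ν, v) ≠ (μ', w') →
      tvNorm μ' + lam * ∑ i, |w' i| < tvNorm ν + lam * ∑ i, |v i| := by
  intro ν v hfeas hne
  set μ'' : ℝ →₀ ℝ := μ - μ' with hμ''def
  have hμ'' : ∀ t, μ'' t = if t ∈ T' then 0 else μ t := by
    intro t
    simp only [hμ''def, Finsupp.sub_apply, hμ' t]
    split <;> ring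
  have hsum : μ' + μ'' = μ := by
    ext t; simp [hμ' t, hμ'' t]; split <;> ring
  set w'' : Fin n → ℝ := fun i => w i - w' i with hw''def
  have hw'' : ∀ i, w'' i = if i ∈ Ω' then 0 else w i := by
    intro i
    simp only [hw''def, hw' i]
    split <;> ring
  -- support subsets
  have hsupμ' : μ'.support ⊆ μ.support := by
    intro t ht
    rw [Finsupp.mem_support_iff] at ht ⊢
    rw [hμ' t] at ht
    split at ht
    · exact ht
    · exact absurd rfl ht
  have hsupμ'' : μ''.support ⊆ μ.support := by
    intro t ht
    rw [Finsupp.mem_support_iff] at ht ⊢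
    rw [hμ'' t] at ht
    split at ht
    · exact absurd rfl ht
    · exact ht
  -- splits
  have hsplitμ : tvNorm μ = tvNorm μ' + tvNorm μ'' := by
    rw [tvNorm_eq_sum_superset μ' μ.support hsupμ',
      tvNorm_eq_sum_superset μ'' μ.support hsupμ'', ← Finset.sum_add_distrib]
    unfold tvNorm
    apply Finset.sum_congr rfl
    intro t _
    rw [hμ' t, hμ'' t]
    split <;> simp
  have hsplitw : (∑ i, |w i|) = (∑ i, |w' i|) + ∑ i, |w'' i| := by
    rw [← Finset.sum_add_distrib]
    apply Finset.sum_congr rfl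
    intro i _
    rw [hw' i, hw'' i]
    split <;> simp
  -- candidate (ν + μ'', v + w'') is feasible for y
  have hfeas2 : ∀ i, convSample K (ν + μ'') (s i) + (v i + w'' i) = y i := by
    intro i
    rw [convSample_add, hy i, ← hsum, convSample_add]
    have := hfeas i
    rw [hy' i] at this
    have hwi : w'' i = w i - w' i := rfl
    linarith [this, hwi]
  by_cases heq : (ν + μ'', fun i => v i + w'' i) = (μ, w)
  · exfalso
    apply hne
    have h1 : ν + μ'' = μ := congrArg Prod.fst heq
    have h2 : (fun i => v i + w'' i) = w := congrArg Prod.snd heq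
    have hν : ν = μ' := by
      have : ν + μ'' = μ' + μ'' := by rw [h1, hsum]
      exact add_right_cancel this
    have hv : v = w' := by
      funext i
      have := congrFun h2 i
      simp only [hw''def] at this
      linarith
    rw [hν, hv]
  · have hlt := hunique (ν + μ'') (fun i => v i + w'' i) hfeas2 heq
    have htri1 : tvNorm (ν + μ'') ≤ tvNorm ν + tvNorm μ'' := tvNorm_add_le ν μ''
    have htri2 : (∑ i, |v i + w'' i|) ≤ (∑ i, |v i|) + ∑ i, |w'' i| := by
      rw [← Finset.sum_add_distrib]
      exact Finset.sum_le_sum (fun i _ => abs_add_le _ _)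
    have h3 : tvNorm μ + lam * ∑ i, |w i| <
        tvNorm ν + tvNorm μ'' + lam * ((∑ i, |v i|) + ∑ i, |w'' i|) := by
      calc tvNorm μ + lam * ∑ i, |w i|
          < tvNorm (ν + μ'') + lam * ∑ i, |v i + w'' i| := hlt
        _ ≤ tvNorm ν + tvNorm μ'' + lam * ((∑ i, |v i|) + ∑ i, |w'' i|) := by
            have := mul_le_mul_of_nonneg_left htri2 hlam.le
            linarith
    rw [hsplitμ, hsplitw] at h3
    nlinarith
end
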